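/- arXiv:math/0002119 — 2 statements merged into one kernel-verified Lean document; each statement's English description precedes it below -/
import Mathlib

section
/- Let N = (X, T, F, w) be a Petri net with initial marking M₀ and let P := {pol(t) : t ∈ T} ⊆ ℚ[X]. If a marking M is reachable from M₀ in N, then pol(M₀) − pol(M) lies in the ideal of ℚ[X] generated by P, i.e. pol(M₀) =_P pol(M). -/
open MvPolynomial Finset

/-- A Petri net on a set `X` of places and a set `T` of transitions.
`pre x t` is the weight `w(x,t)` of the edge from place `x` to transition `t`,
and `post t x` is the weight `w(t,x)` (weights are `0` off the flow relation). -/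
structure PetriNet (X T : Type*) where
  pre : X → T → ℕ
  post : T → X → ℕ

/-- A transition `t` is enabled at a marking `M` if every place `x` holds
at least `w(x,t)` tokens. -/
def PetriNet.enabled {X T : Type*} (N : PetriNet X T) (t : T) (M : X → ℕ) : Prop :=
  ∀ x, N.pre x t ≤ M x

/-- Firing transition `t` at marking `M` removes `w(x,t)` tokens from each place
and adds `w(t,x)` tokens to each place. -/
def PetriNet.fire {X T : Type*} (N : PetriNet X T) (t : T) (M : X → ℕ) : X → ℕ :=
  fun x => M x - N.pre x t + N.post t x

/-- `M'` is reachable from `M` if some finite sequence of firings of enabled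
transitions transforms `M` into `M'`. -/
def PetriNet.Reachable {X T : Type*} (N : PetriNet X T) : (X → ℕ) → (X → ℕ) → Prop :=
  Relation.ReflTransGen (fun M M' => ∃ t, N.enabled t M ∧ M' = N.fire t M)

/-- The polynomial `pol(M) = ∏ x^(M x)` associated to a marking. -/
noncomputable def polM {X : Type*} [Fintype X] (M : X → ℕ) : MvPolynomial X ℚ :=
  ∏ x, (MvPolynomial.X x : MvPolynomial X ℚ) ^ M x

/-- The monomial `l_t = ∏ x^(w(x,t))` of the inputs of a transition. -/
noncomputable def polIn {X T : Type*} [Fintype X] (N : PetriNet X T) (t : T) :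
    MvPolynomial X ℚ :=
  ∏ x, (MvPolynomial.X x : MvPolynomial X ℚ) ^ N.pre x t

/-- The monomial `r_t = ∏ x^(w(t,x))` of the outputs of a transition. -/
noncomputable def polOut {X T : Type*} [Fintype X] (N : PetriNet X T) (t : T) :
    MvPolynomial X ℚ :=
  ∏ x, (MvPolynomial.X x : MvPolynomial X ℚ) ^ N.post t x

/-- The polynomial `pol(t) = l_t - r_t` associated to a transition. -/
noncomputable def polT {X T : Type*} [Fintype X] (N : PetriNet X T) (t : T) :
    MvPolynomial X ℚ :=
  polIn N t - polOut N t

/-! Firing an enabled transition `t` at `M` factors `pol(M)` as `m · l_t` and the new marking's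
polynomial as `m · r_t`, with `m` the polynomial of the tokens left untouched; so consecutive
markings differ by a multiple of `pol(t)`, and the differences telescope along a firing sequence. -/

theorem polM_add {X : Type*} [Fintype X] (M M' : X → ℕ) :
    polM (M + M') = polM M * polM M' := by
  simp only [polM, Pi.add_apply, pow_add, prod_mul_distrib]

namespace PetriNet

variable {X T : Type*} [Fintype X] (N : PetriNet X T) {t : T} {M : X → ℕ}

theorem polM_sub_polM_fire (ht : N.enabled t M) :
    polM M - polM (N.fire t M) = polM (M - fun x => N.pre x t) * polT N t := by
  have hM : M = (M - fun x => N.pre x t) + fun x => N.pre x t := (tsub_add_cancel_of_le ht).symm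
  have hfire : N.fire t M = (M - fun x => N.pre x t) + N.post t := rfl
  rw [hfire, polT, mul_sub, polIn, polOut, ← polM, ← polM, ← polM_add, ← polM_add, ← hM]

theorem polM_sub_polM_fire_mem (ht : N.enabled t M) :
    polM M - polM (N.fire t M) ∈ Ideal.span (Set.range (polT N)) := by
  rw [N.polM_sub_polM_fire ht]
  exact Ideal.mul_mem_left _ _ (Ideal.subset_span ⟨t, rfl⟩)

end PetriNet

/-- if a marking `M` is reachable from `M₀`, then
`pol(M₀) - pol(M)` lies in the ideal of `ℚ[X]` generated by
`P = {pol(t) : t ∈ T}`, i.e. `pol(M₀) =_P pol(M)`. -/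
theorem reachable_polynomial_equiv {X T : Type*} [Fintype X] (N : PetriNet X T)
    (M₀ M : X → ℕ) (h : N.Reachable M₀ M) :
    polM M₀ - polM M ∈ Ideal.span (Set.range (polT N)) := by
  induction h with
  | refl => rw [sub_self]; exact zero_mem _
  | tail _ hstep ih =>
    obtain ⟨t, ht, rfl⟩ := hstep
    rw [← sub_add_sub_cancel _ (polM _)]
    exact add_mem ih (N.polM_sub_polM_fire_mem ht)
end

section
/- Let N = (X, T, F, w) be a Petri net and let M₀ and M be markings such that pol(M₀) ≠ pol(M) and pol(M₀) = pol(M) ± u₁·pol(t₁) ± ⋯ ± u_m·pol(t_m) in ℚ[X] for some m ≥ 1, transitions t₁, …, t_m ∈ T, power products u₁, …, u_m ∈ X^Δ, and some choice of signs. Then there exists an index i ∈ {1, …, m} such that either pol(M₀) = uᵢ·lᵢ or pol(M₀) = uᵢ·rᵢ, where pol(tᵢ) = lᵢ − rᵢ with lᵢ = ∏_{x∈X} x^{w(x,tᵢ)} and rᵢ = ∏_{x∈X} x^{w(tᵢ,x)}. -/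
open MvPolynomial Finset

/-! The monomial `pol(M₀)` has coefficient `1` at its own exponent and `pol(M)` has coefficient
`0` there, so some term `±uᵢ·(lᵢ - rᵢ)` has a nonzero coefficient at that exponent; since `uᵢ·lᵢ`
and `uᵢ·rᵢ` are monomials, one of them is `pol(M₀)`. -/

namespace MvPolynomial

variable {σ R : Type*}

theorem prod_X_pow_eq_monomial_equivFunOnFinite [CommSemiring R] [Fintype σ] (f : σ → ℕ) :
    ∏ x, (X x : MvPolynomial σ R) ^ f x = monomial (Finsupp.equivFunOnFinite.symm f) 1 := by
  rw [monomial_eq, C_1, one_mul, Finsupp.prod_fintype _ _ fun _ => pow_zero _]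
  rfl

theorem exists_add_eq_of_monomial_eq_add_sum {ι : Type*} [CommRing R] [Nontrivial R]
    {d e : σ →₀ ℕ} (hde : d ≠ e) (s : Finset ι) (c : ι → R) (u a b : ι → σ →₀ ℕ)
    (h : monomial d (1 : R) =
      monomial e 1 + ∑ i ∈ s, c i • (monomial (u i) 1 * (monomial (a i) 1 - monomial (b i) 1))) :
    ∃ i ∈ s, u i + a i = d ∨ u i + b i = d := by
  classical
  have hcoeff := congrArg (coeff d) h
  simp only [coeff_add, coeff_sum, coeff_smul, mul_sub, monomial_mul, one_mul, coeff_sub,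
    coeff_monomial, ↓reduceIte, if_neg hde.symm, zero_add, smul_eq_mul] at hcoeff
  obtain ⟨i, hi, hne⟩ := Finset.exists_ne_zero_of_sum_ne_zero (hcoeff ▸ one_ne_zero :)
  refine ⟨i, hi, ?_⟩
  by_contra! hi'
  simp [hi'.1, hi'.2] at hne

end MvPolynomial

theorem polM_eq_monomial {X : Type*} [Fintype X] (M : X → ℕ) :
    polM M = monomial (Finsupp.equivFunOnFinite.symm M) 1 :=
  prod_X_pow_eq_monomial_equivFunOnFinite M

theorem polIn_eq_monomial {X T : Type*} [Fintype X] (N : PetriNet X T) (t : T) :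
    polIn N t = monomial (Finsupp.equivFunOnFinite.symm (N.pre · t)) 1 :=
  prod_X_pow_eq_monomial_equivFunOnFinite _

theorem polOut_eq_monomial {X T : Type*} [Fintype X] (N : PetriNet X T) (t : T) :
    polOut N t = monomial (Finsupp.equivFunOnFinite.symm (N.post t)) 1 :=
  prod_X_pow_eq_monomial_equivFunOnFinite _

theorem exists_matching_monomial_general {X T : Type*} [Fintype X] (N : PetriNet X T)
    (M₀ M : X → ℕ) (m : ℕ)
    (t : Fin m → T) (u : Fin m → (X →₀ ℕ)) (ε : Fin m → ℚ)
    (hne : polM M₀ ≠ polM M)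
    (heq : polM M₀ =
      polM M + ∑ i : Fin m, ε i • ((monomial (u i) (1 : ℚ)) * polT N (t i))) :
    ∃ i : Fin m,
      polM M₀ = (monomial (u i) (1 : ℚ)) * polIn N (t i) ∨
      polM M₀ = (monomial (u i) (1 : ℚ)) * polOut N (t i) := by
  simp only [polT, polM_eq_monomial, polIn_eq_monomial, polOut_eq_monomial] at hne heq ⊢
  have hexp := fun h => hne (congrArg (monomial · (1 : ℚ)) h)
  obtain ⟨i, -, hi⟩ := exists_add_eq_of_monomial_eq_add_sum hexp Finset.univ ε u _ _ heq
  refine ⟨i, ?_⟩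
  simp only [monomial_mul, one_mul]
  exact hi.imp (congrArg (monomial · 1) ·.symm) (congrArg (monomial · 1) ·.symm)

/-- if `pol(M₀) ≠ pol(M)` and
`pol(M₀) = pol(M) ± u₁·pol(t₁) ± ⋯ ± u_m·pol(t_m)` for some `m ≥ 1`, transitions
`t₁, …, t_m`, power products `u₁, …, u_m` and signs `ε₁, …, ε_m ∈ {1, -1}`, then
for some `i` either `pol(M₀) = uᵢ·lᵢ` or `pol(M₀) = uᵢ·rᵢ`, where
`pol(tᵢ) = lᵢ - rᵢ`. -/
theorem exists_matching_monomial {X T : Type*} [Fintype X] (N : PetriNet X T)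
    (M₀ M : X → ℕ) (m : ℕ) (hm : 1 ≤ m)
    (t : Fin m → T) (u : Fin m → (X →₀ ℕ)) (ε : Fin m → ℚ)
    (hsign : ∀ i, ε i = 1 ∨ ε i = -1)
    (hne : polM M₀ ≠ polM M)
    (heq : polM M₀ =
      polM M + ∑ i : Fin m, ε i • ((monomial (u i) (1 : ℚ)) * polT N (t i))) :
    ∃ i : Fin m,
      polM M₀ = (monomial (u i) (1 : ℚ)) * polIn N (t i) ∨
      polM M₀ = (monomial (u i) (1 : ℚ)) * polOut N (t i) :=
  exists_matching_monomial_general N M₀ M m t u ε hne heq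
end
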